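/- Let G = (V,A) be a finite simple graph in which every vertex has degree at least 2, n = n(G) = W ⊕ z its graph algebra over a field k of characteristic zero, and δ a nearly coboundary Lie bialgebra structure on n with δ(v) = Σ_{α∈A} D_α(v)∧α + Φ*(v) for v ∈ W. Assume each D_α is diagonal in the vertex basis: D_α(e_i) = λ_{i,α} e_i. If α₀ is an edge joining vertices i₀ and j₀, then λ_{i₀,α} = −λ_{j₀,α} for every edge α ≠ α₀. -/

import Mathlib

/-!
Apply the cocycle condition to `⁅e_{i₀}, e_{j₀}⁆ = α₀`. Since `δ α₀ = 0` and the center acts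
trivially on `n ⊗ n` (in particular on `Φ*(e_i) ∈ z ⊗ z`), it reads
`0 = e_{i₀} · δ e_{j₀} - e_{j₀} · δ e_{i₀} = Σ_α (λ_{j₀,α} + λ_{i₀,α}) α₀ ∧ α`,
and for `α ≠ α₀` the coefficient of `α₀ ⊗ α` in this sum is `λ_{j₀,α} + λ_{i₀,α}`.
-/

open TensorProduct

set_option synthInstance.maxHeartbeats 1000000
set_option maxHeartbeats 1000000

/-- The adjoint action of a Lie algebra `g` on `g ⊗ g`, determined by
`x · (a ⊗ b) = ⁅x,a⁆ ⊗ b + a ⊗ ⁅x,b⁆`. -/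
noncomputable def tAct (k g : Type*) [CommRing k] [LieRing g] [LieAlgebra k g] (x : g) :
    g ⊗[k] g →ₗ[k] g ⊗[k] g :=
  TensorProduct.map (LieAlgebra.ad k g x) LinearMap.id
    + TensorProduct.map LinearMap.id (LieAlgebra.ad k g x)

/-- The cyclic rotation `(a⊗b)⊗c ↦ (c⊗a)⊗b` on `(g⊗g)⊗g`. -/
noncomputable def tCyc (k g : Type*) [CommRing k] [AddCommGroup g] [Module k g] :
    (g ⊗[k] g) ⊗[k] g →ₗ[k] (g ⊗[k] g) ⊗[k] g :=
  ((TensorProduct.assoc k g g g).symm.toLinearMap).comp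
    (TensorProduct.comm k (g ⊗[k] g) g).toLinearMap

/-- For submodules `P Q ⊆ g`, the image of `P ⊗ Q` in `g ⊗ g`. -/
noncomputable def tsub (k g : Type*) [CommRing k] [AddCommGroup g] [Module k g]
    (P Q : Submodule k g) : Submodule k (g ⊗[k] g) :=
  LinearMap.range (TensorProduct.map P.subtype Q.subtype)

/-- The degree (valency) of a vertex `e` in the graph with edge set `A` and
endpoint maps `src`, `tgt`. -/
def deg {V A : Type*} [Fintype A] [DecidableEq V] (src tgt : A → V) (e : V) : ℕ :=
  (Finset.univ.filter (fun a : A => src a = e ∨ tgt a = e)).card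

def wedge (k : Type*) {g : Type*} [CommRing k] [AddCommGroup g] [Module k g] (u v : g) :
    g ⊗[k] g :=
  u ⊗ₜ[k] v - v ⊗ₜ[k] u

theorem wedge_neg_left {k g : Type*} [CommRing k] [AddCommGroup g] [Module k g] (u v : g) :
    wedge k (-u) v = -wedge k u v := by
  simp only [wedge, neg_tmul, tmul_neg, neg_sub, sub_neg_eq_add, neg_add_eq_sub]

section Cocycle

variable {k g : Type*} [CommRing k] [LieRing g] [LieAlgebra k g]

@[simp]
theorem tAct_tmul (x u v : g) : tAct k g x (u ⊗ₜ[k] v) = ⁅x, u⁆ ⊗ₜ[k] v + u ⊗ₜ[k] ⁅x, v⁆ := by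
  simp [tAct, LieAlgebra.ad_apply]

theorem tAct_wedge_of_mem_center (x u : g) {z : g} (hz : z ∈ LieAlgebra.center k g) :
    tAct k g x (wedge k u z) = wedge k ⁅x, u⁆ z := by
  rw [LieModule.mem_maxTrivSubmodule] at hz
  simp [wedge, hz x]

theorem tAct_eq_zero_of_mem_tsub {Z : Submodule k g}
    (hZ : Z ≤ (LieAlgebra.center k g).toSubmodule) (x : g) {p : g ⊗[k] g}
    (hp : p ∈ tsub k g Z Z) : tAct k g x p = 0 := by
  have hcen : ∀ z ∈ Z, ⁅x, z⁆ = 0 := fun z hz =>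
    (LieModule.mem_maxTrivSubmodule k g g z).mp (hZ hz) x
  obtain ⟨q, rfl⟩ := hp
  induction q using TensorProduct.induction_on with
  | zero => simp
  | tmul u v => simp [hcen u u.2, hcen v v.2]
  | add p q hp hq => rw [map_add, map_add, hp, hq, add_zero]

theorem tAct_sum_wedge_add {ι : Type*} [Fintype ι] {Z : Submodule k g}
    (hZ : Z ≤ (LieAlgebra.center k g).toSubmodule) (x y : g) (c : ι → k) {z : ι → g}
    (hz : ∀ b, z b ∈ Z) {p : g ⊗[k] g} (hp : p ∈ tsub k g Z Z) :
    tAct k g x (∑ b, c b • wedge k y (z b) + p) = ∑ b, c b • wedge k ⁅x, y⁆ (z b) := by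
  simp only [map_add, map_sum, map_smul, tAct_eq_zero_of_mem_tsub hZ x hp, add_zero,
    tAct_wedge_of_mem_center x y (hZ (hz _))]

theorem sum_wedge_eq_zero_of_cocycle {ι : Type*} [Fintype ι] {Z : Submodule k g}
    (hZ : Z ≤ (LieAlgebra.center k g).toSubmodule) (δ : g →ₗ[k] g ⊗[k] g) {x y : g}
    (hcoc : δ ⁅x, y⁆ = tAct k g x (δ y) - tAct k g y (δ x)) (hδ : δ ⁅x, y⁆ = 0)
    {z : ι → g} (hz : ∀ b, z b ∈ Z) (lx ly : ι → k) {px py : g ⊗[k] g}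
    (hpx : px ∈ tsub k g Z Z) (hpy : py ∈ tsub k g Z Z)
    (hx : δ x = ∑ b, lx b • wedge k x (z b) + px)
    (hy : δ y = ∑ b, ly b • wedge k y (z b) + py) :
    ∑ b, (ly b + lx b) • wedge k ⁅x, y⁆ (z b) = 0 := by
  rw [hδ, hx, hy, tAct_sum_wedge_add hZ x y ly hz hpy, tAct_sum_wedge_add hZ y x lx hz hpx,
    eq_comm, sub_eq_zero, ← lie_skew y x] at hcoc
  simp only [add_smul, Finset.sum_add_distrib, hcoc, wedge_neg_left, smul_neg,
    Finset.sum_neg_distrib, neg_add_cancel]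

end Cocycle

theorem Module.Basis.tensorProduct_repr_sum_wedge {k M ι κ : Type*} [CommRing k]
    [AddCommGroup M] [Module k M] [Fintype κ] (B : Module.Basis ι k M) {e : κ → ι}
    (he : Function.Injective e)
    (c : κ → k) {i j : κ} (hij : i ≠ j) :
    (B.tensorProduct B).repr (∑ b, c b • wedge k (B (e i)) (B (e b))) (e i, e j) = c j := by
  classical
  simp [wedge, Finsupp.single_apply, he.eq_iff, hij]

theorem stmt16_general (k V A N : Type*) [Field k]
    [Fintype A]
    [LieRing N] [LieAlgebra k N]
    (src tgt : A → V)
    (B : Module.Basis (V ⊕ A) k N)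
    (hbz : ∀ (a : A) (x : N), ⁅B (Sum.inr a), x⁆ = 0)
    (hbe : ∀ a : A, ⁅B (Sum.inl (src a)), B (Sum.inl (tgt a))⁆ = B (Sum.inr a))
    (Z : Submodule k N)
    (hZ : Z = Submodule.span k (Set.range fun a : A => B (Sum.inr a)))
    -- δ is a Lie bialgebra structure on n:
    (δ : N →ₗ[k] N ⊗[k] N)
    (hcoc : ∀ x y, δ ⁅x, y⁆ = tAct k N x (δ y) - tAct k N y (δ x))
    -- δ is nearly coboundary:
    (hnc : ∀ z ∈ Z, δ z = 0)
    -- δ on W has the form δ(e_i) = Σ_α λ_{i,α} e_i∧α + Φ*(e_i) (diagonal D_α's):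
    (lam : V → A → k)
    (P : V → N ⊗[k] N)
    (hP : ∀ i : V, P i ∈ tsub k N Z Z)
    (hform : ∀ i : V, δ (B (Sum.inl i))
      = ∑ a : A, lam i a • (B (Sum.inl i) ⊗ₜ[k] B (Sum.inr a)
          - B (Sum.inr a) ⊗ₜ[k] B (Sum.inl i)) + P i)
    (a₀ : A) :
    ∀ a : A, a ≠ a₀ → lam (src a₀) a = - lam (tgt a₀) a := by
  intro a ha
  have hzZ : ∀ b, B (Sum.inr b) ∈ Z := fun b => hZ ▸ Submodule.subset_span ⟨b, rfl⟩
  have hZc : Z ≤ (LieAlgebra.center k N).toSubmodule := by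
    rw [hZ, Submodule.span_le]
    rintro _ ⟨b, rfl⟩
    exact (LieModule.mem_maxTrivSubmodule k N N _).mpr fun x => by rw [← lie_skew, hbz, neg_zero]
  have hsum := sum_wedge_eq_zero_of_cocycle hZc δ (hcoc _ _) (hnc _ (by rw [hbe]; exact hzZ a₀))
    hzZ _ _ (hP _) (hP _) (hform (src a₀)) (hform (tgt a₀))
  rw [hbe] at hsum
  have hcoef := congrArg (fun t => (B.tensorProduct B).repr t (Sum.inr a₀, Sum.inr a)) hsum
  simp only [B.tensorProduct_repr_sum_wedge Sum.inr_injective _ (Ne.symm ha), map_zero,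
    Finsupp.coe_zero, Pi.zero_apply] at hcoef
  linear_combination hcoef

/-- let `G` be a finite simple graph in which every vertex has degree at
least 2, `n = n(G) = W ⊕ z` its graph algebra, and `δ` a nearly coboundary Lie bialgebra
structure on `n` with `δ(v) = Σ_α D_α(v)∧α + Φ*(v)` on `W`, where each `D_α` is diagonal
in the vertex basis, `D_α(e_i) = λ_{i,α} e_i`.  If `α₀` is an edge joining `i₀` and `j₀`
then `λ_{i₀,α} = -λ_{j₀,α}` for every edge `α ≠ α₀`. -/
theorem stmt16 (k V A N : Type*) [Field k] [CharZero k]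
    [Fintype V] [Fintype A] [DecidableEq V] [DecidableEq A]
    [LieRing N] [LieAlgebra k N]
    (src tgt : A → V)
    (hloop : ∀ a, src a ≠ tgt a)
    (hsimple : ∀ a b : A,
      (src a = src b ∧ tgt a = tgt b) ∨ (src a = tgt b ∧ tgt a = src b) → a = b)
    (B : Module.Basis (V ⊕ A) k N)
    (hbz : ∀ (a : A) (x : N), ⁅B (Sum.inr a), x⁆ = 0)
    (hbe : ∀ a : A, ⁅B (Sum.inl (src a)), B (Sum.inl (tgt a))⁆ = B (Sum.inr a))
    (hbe0 : ∀ i j : V,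
      (∀ a : A, ¬((src a = i ∧ tgt a = j) ∨ (src a = j ∧ tgt a = i))) →
      ⁅B (Sum.inl i), B (Sum.inl j)⁆ = 0)
    (hdeg : ∀ e : V, 2 ≤ deg src tgt e)
    (Z : Submodule k N)
    (hZ : Z = Submodule.span k (Set.range fun a : A => B (Sum.inr a)))
    -- δ is a Lie bialgebra structure on n:
    (δ : N →ₗ[k] N ⊗[k] N)
    (hanti : ∀ x, TensorProduct.comm k N N (δ x) = - δ x)
    (hcoJ : ∀ x, (TensorProduct.map δ LinearMap.id) (δ x)
        + tCyc k N ((TensorProduct.map δ LinearMap.id) (δ x))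
        + tCyc k N (tCyc k N ((TensorProduct.map δ LinearMap.id) (δ x))) = 0)
    (hcoc : ∀ x y, δ ⁅x, y⁆ = tAct k N x (δ y) - tAct k N y (δ x))
    -- δ is nearly coboundary:
    (hnc : ∀ z ∈ Z, δ z = 0)
    -- δ on W has the form δ(e_i) = Σ_α λ_{i,α} e_i∧α + Φ*(e_i) (diagonal D_α's):
    (lam : V → A → k)
    (P : V → N ⊗[k] N)
    (hP : ∀ i : V, P i ∈ tsub k N Z Z)
    (hform : ∀ i : V, δ (B (Sum.inl i))
      = ∑ a : A, lam i a • (B (Sum.inl i) ⊗ₜ[k] B (Sum.inr a)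
          - B (Sum.inr a) ⊗ₜ[k] B (Sum.inl i)) + P i)
    (a₀ : A) :
    ∀ a : A, a ≠ a₀ → lam (src a₀) a = - lam (tgt a₀) a :=
  stmt16_general k V A N src tgt B hbz hbe Z hZ δ hcoc hnc lam P hP hform a₀
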